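/- arXiv:2208.08262 — 2 statements merged into one kernel-verified Lean document; each statement's English description precedes it below -/
import Mathlib

section
/- Let G be a Hausdorff topological group whose underlying space is Lindelöf and not a P-space. Then G contains a normal subgroup N that is closed in G, nowhere dense in G, and a Gδ set in G. -/
open Set Topology Pointwise

universe u v w

/-- A cozero set: the set where some continuous real-valued function is nonzero. -/
def IsCozeroSet {X : Type u} [TopologicalSpace X] (s : Set X) : Prop :=
  ∃ f : X → ℝ, Continuous f ∧ s = {x | f x ≠ 0}

/-- An F-space: any two disjoint cozero sets are completely separated. -/
def IsFSpace (X : Type u) [TopologicalSpace X] : Prop :=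
  ∀ s t : Set X, IsCozeroSet s → IsCozeroSet t → Disjoint s t →
    ∃ g : X → ℝ, Continuous g ∧ (∀ x, g x ∈ Set.Icc (0 : ℝ) 1) ∧
      (∀ x ∈ s, g x = 0) ∧ (∀ x ∈ t, g x = 1)

/-- An F'-space: any two disjoint cozero sets have disjoint closures. -/
def IsFPrimeSpace (X : Type u) [TopologicalSpace X] : Prop :=
  ∀ s t : Set X, IsCozeroSet s → IsCozeroSet t → Disjoint s t →
    Disjoint (closure s) (closure t)

/-- A basically disconnected space: the closure of every cozero set is open. -/
def IsBasicallyDisconnected (X : Type u) [TopologicalSpace X] : Prop :=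
  ∀ s : Set X, IsCozeroSet s → IsOpen (closure s)

/-- A P-space: every Gδ set is open. -/
def IsPSpace (X : Type u) [TopologicalSpace X] : Prop :=
  ∀ s : Set X, IsGδ s → IsOpen s

/-- Covering dimension at most `n`: every finite open cover has a finite open
refinement in which every point belongs to at most `n + 1` members. -/
def CovDimLE (X : Type u) [TopologicalSpace X] (n : ℕ) : Prop :=
  ∀ 𝒰 : Finset (Set X), (∀ U ∈ 𝒰, IsOpen U) → ⋃₀ (𝒰 : Set (Set X)) = Set.univ →
    ∃ 𝒱 : Finset (Set X), (∀ V ∈ 𝒱, IsOpen V) ∧ ⋃₀ (𝒱 : Set (Set X)) = Set.univ ∧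
      (∀ V ∈ 𝒱, ∃ U ∈ 𝒰, V ⊆ U) ∧
      ∀ x : X, {V : Set X | V ∈ 𝒱 ∧ x ∈ V}.ncard ≤ n + 1

/-- An ℝ-quotient map: a continuous surjection such that a real-valued function on the
target is continuous whenever its composition with the map is continuous. -/
def IsRQuotientMap {X : Type u} {Y : Type v} [TopologicalSpace X] [TopologicalSpace Y]
    (p : X → Y) : Prop :=
  Continuous p ∧ Function.Surjective p ∧ ∀ φ : Y → ℝ, Continuous (φ ∘ p) → Continuous φ

/-- A non-P-point: a point having a Gδ set around it which is not a neighborhood of it. -/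
def IsNonPPoint {X : Type u} [TopologicalSpace X] (x : X) : Prop :=
  ∃ s : Set X, IsGδ s ∧ x ∈ s ∧ s ∉ nhds x


/-!
Translating a Gδ set that is not open gives a Gδ set `S = ⋂ Tₙ` containing `1` that is not a
neighbourhood of `1`. In a Lindelöf group every neighbourhood `U` of `1` admits countably many
neighbourhoods `W` of `1` such that each conjugate `g W g⁻¹` lies in `U` for one of them (cover `G`
by countably many translates `V c`). Closing the `Tₙ` under halving, inversion and this operation
yields a countable family of open neighbourhoods of `1` whose intersection is a closed normal Gδ
subgroup contained in `S`; it is not open, so it has empty interior.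
-/

lemma Set.Countable.exists_superset_forall_subset {α : Type*} {s : Set α} (hs : s.Countable)
    (F : α → Set α) (hF : ∀ a, (F a).Countable) :
    ∃ t, s ⊆ t ∧ t.Countable ∧ ∀ a ∈ t, F a ⊆ t := by
  set step : Set α → Set α := fun u => u ∪ ⋃ a ∈ u, F a
  have hstep : ∀ n, (step^[n] s).Countable := by
    intro n
    induction n with
    | zero => exact hs
    | succ n ih =>
      rw [Function.iterate_succ_apply']
      exact ih.union (ih.biUnion fun a _ => hF a)
  refine ⟨⋃ n, step^[n] s, subset_iUnion (fun n => step^[n] s) 0,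
    countable_iUnion hstep, fun a ha => ?_⟩
  obtain ⟨n, hn⟩ := mem_iUnion.mp ha
  refine Subset.trans ?_ (subset_iUnion _ (n + 1))
  rw [Function.iterate_succ_apply']
  exact subset_union_of_subset_right (subset_biUnion_of_mem hn) _

section NhdsSystem

variable {G : Type*} [Group G]

structure IsNormalNhdsSystem [TopologicalSpace G] (𝒱 : Set (Set G)) : Prop where
  isOpen : ∀ W ∈ 𝒱, IsOpen W
  one_mem : ∀ W ∈ 𝒱, (1 : G) ∈ W
  exists_mul_subset : ∀ W ∈ 𝒱, ∃ W' ∈ 𝒱, W' * W' ⊆ W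
  inv_mem : ∀ W ∈ 𝒱, W⁻¹ ∈ 𝒱
  exists_conj_subset : ∀ W ∈ 𝒱, ∀ g : G, ∃ W' ∈ 𝒱, ∀ x ∈ W', g * x * g⁻¹ ∈ W

namespace IsNormalNhdsSystem

variable [TopologicalSpace G] {𝒱 : Set (Set G)}

def subgroup (h : IsNormalNhdsSystem 𝒱) : Subgroup G where
  carrier := ⋂₀ 𝒱
  one_mem' := mem_sInter.mpr h.one_mem
  mul_mem' {a b} ha hb := mem_sInter.mpr fun W hW => by
    obtain ⟨W', hW', hW'W⟩ := h.exists_mul_subset W hW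
    exact hW'W (mul_mem_mul (ha W' hW') (hb W' hW'))
  inv_mem' {a} ha := mem_sInter.mpr fun W hW => by
    simpa using ha _ (h.inv_mem W hW)

lemma subgroup_normal (h : IsNormalNhdsSystem 𝒱) : h.subgroup.Normal where
  conj_mem y hy g := mem_sInter.mpr fun W hW => by
    obtain ⟨W', hW', hW'W⟩ := h.exists_conj_subset W hW g
    exact hW'W y (hy W' hW')

lemma isClosed_subgroup [IsTopologicalGroup G] (h : IsNormalNhdsSystem 𝒱) :
    IsClosed (h.subgroup : Set G) := by
  refine closure_subset_iff_isClosed.mp (subset_sInter fun W hW => ?_)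
  obtain ⟨W', hW', hW'W⟩ := h.exists_mul_subset W hW
  calc closure (h.subgroup : Set G) ⊆ closure W' := closure_mono (sInter_subset_of_mem hW')
    _ ⊆ W' * W' := closure_subset_mul_self_of_mem_nhds_one
        ((h.isOpen W' hW').mem_nhds (h.one_mem W' hW'))
    _ ⊆ W := hW'W

lemma isGδ_subgroup (h : IsNormalNhdsSystem 𝒱) (hc : 𝒱.Countable) :
    IsGδ (h.subgroup : Set G) :=
  IsGδ.sInter (fun W hW => (h.isOpen W hW).isGδ) hc

end IsNormalNhdsSystem

end NhdsSystem

section TopologicalGroup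

variable {G : Type*} [Group G] [TopologicalSpace G] [IsTopologicalGroup G]

lemma exists_isGδ_one_mem_notMem_nhds_one (hG : ¬ IsPSpace G) :
    ∃ S : Set G, IsGδ S ∧ (1 : G) ∈ S ∧ S ∉ 𝓝 (1 : G) := by
  obtain ⟨s, hsGδ, hs⟩ : ∃ s : Set G, IsGδ s ∧ ¬ IsOpen s := by
    simpa [IsPSpace] using hG
  obtain ⟨x, hxs, hsx⟩ : ∃ x ∈ s, s ∉ 𝓝 x := by
    simpa [isOpen_iff_mem_nhds] using hs
  refine ⟨(x * ·) ⁻¹' s, hsGδ.preimage (continuous_const_mul x), by simpa using hxs, ?_⟩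
  rwa [← Filter.mem_map, map_mul_left_nhds_one]

lemma LindelofSpace.exists_countable_conj_subset [LindelofSpace G] {U : Set G}
    (hU : U ∈ 𝓝 (1 : G)) :
    ∃ 𝒲 : Set (Set G), 𝒲.Countable ∧ (∀ W ∈ 𝒲, IsOpen W ∧ (1 : G) ∈ W) ∧
      ∀ g : G, ∃ W ∈ 𝒲, ∀ x ∈ W, g * x * g⁻¹ ∈ U := by
  have hconj : Filter.Tendsto (fun p : G × G => p.1 * p.2 * p.1⁻¹) (𝓝 1 ×ˢ 𝓝 1) (𝓝 1) := by
    rw [← nhds_prod_eq]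
    simpa using (show Continuous fun p : G × G => p.1 * p.2 * p.1⁻¹ by fun_prop).tendsto (1, 1)
  obtain ⟨V, hV, hVU⟩ := Filter.mem_prod_self_iff.mp (hconj hU)
  obtain ⟨C, hC, hcover⟩ :=
    LindelofSpace.elim_nhds_subcover (fun c : G => (· * c⁻¹) ⁻¹' V) fun c =>
      (continuous_mul_const c⁻¹).continuousAt.preimage_mem_nhds (by simpa using hV)
  -- `g = v * c` with `v ∈ V`, and conjugating by `c` first lands in `V`.
  refine ⟨(fun c : G => (c * · * c⁻¹) ⁻¹' interior V) '' C, hC.image _, ?_, fun g => ?_⟩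
  · rintro _ ⟨c, -, rfl⟩
    exact ⟨isOpen_interior.preimage (by fun_prop),
      by simpa using mem_interior_iff_mem_nhds.mpr hV⟩
  · obtain ⟨c, hc, hgc⟩ := mem_iUnion₂.mp (hcover ▸ mem_univ g)
    refine ⟨_, mem_image_of_mem _ hc, fun x hx => ?_⟩
    have := @hVU (g * c⁻¹, c * x * c⁻¹) ⟨hgc, interior_subset hx⟩
    simpa [mul_assoc] using this

lemma LindelofSpace.exists_isNormalNhdsSystem_superset [LindelofSpace G] {T : Set (Set G)}
    (hT : T.Countable) (hTopen : ∀ W ∈ T, IsOpen W) (hT1 : ∀ W ∈ T, (1 : G) ∈ W) :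
    ∃ 𝒱, T ⊆ 𝒱 ∧ 𝒱.Countable ∧ IsNormalNhdsSystem 𝒱 := by
  let Nbd := {W : Set G // IsOpen W ∧ (1 : G) ∈ W}
  have half (W : Nbd) : ∃ W' : Nbd, W'.1 * W'.1 ⊆ W.1 := by
    obtain ⟨V, hV, hV1, hVW⟩ := exists_open_nhds_one_mul_subset (W.2.1.mem_nhds W.2.2)
    exact ⟨⟨V, hV, hV1⟩, hVW⟩
  have conj (W : Nbd) : ∃ 𝒲 : Set Nbd, 𝒲.Countable ∧
      ∀ g : G, ∃ W' ∈ 𝒲, ∀ x ∈ W'.1, g * x * g⁻¹ ∈ W.1 := by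
    obtain ⟨𝒲, h𝒲, h𝒲1, h𝒲W⟩ :=
      LindelofSpace.exists_countable_conj_subset (W.2.1.mem_nhds W.2.2)
    refine ⟨Subtype.val ⁻¹' 𝒲, h𝒲.preimage Subtype.val_injective, fun g => ?_⟩
    obtain ⟨W', hW', hW'W⟩ := h𝒲W g
    exact ⟨⟨W', h𝒲1 W' hW'⟩, hW', hW'W⟩
  choose half hhalf using half
  choose conj hconj hconjW using conj
  let inv (W : Nbd) : Nbd := ⟨W.1⁻¹, W.2.1.inv, by simpa using W.2.2⟩
  obtain ⟨t, hTt, ht, htF⟩ := Set.Countable.exists_superset_forall_subset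
    (hT.preimage Subtype.val_injective : (Subtype.val ⁻¹' T : Set Nbd).Countable)
    (fun W => insert (half W) (insert (inv W) (conj W)))
    (fun W => ((hconj W).insert _).insert _)
  refine ⟨Subtype.val '' t, fun W hW => ⟨⟨W, hTopen W hW, hT1 W hW⟩, hTt hW, rfl⟩,
    ht.image _, ⟨?_, ?_, ?_, ?_, ?_⟩⟩
  · rintro _ ⟨W, -, rfl⟩
    exact W.2.1
  · rintro _ ⟨W, -, rfl⟩
    exact W.2.2
  · rintro _ ⟨W, hW, rfl⟩
    exact ⟨_, mem_image_of_mem _ (htF W hW (mem_insert _ _)), hhalf W⟩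
  · rintro _ ⟨W, hW, rfl⟩
    exact mem_image_of_mem _ (htF W hW (mem_insert_of_mem _ (mem_insert _ _)))
  · rintro _ ⟨W, hW, rfl⟩ g
    obtain ⟨W', hW', hW'W⟩ := hconjW W g
    exact ⟨_, mem_image_of_mem _ (htF W hW (mem_insert_of_mem _ (mem_insert_of_mem _ hW'))),
      hW'W⟩

end TopologicalGroup

theorem statement6_general {G : Type u} [Group G] [TopologicalSpace G] [IsTopologicalGroup G]
    [LindelofSpace G] (hG : ¬ IsPSpace G) :
    ∃ N : Subgroup G, N.Normal ∧ IsClosed (N : Set G) ∧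
      IsNowhereDense (N : Set G) ∧ IsGδ (N : Set G) := by
  obtain ⟨S, ⟨T, hTopen, hT, rfl⟩, hS1, hS⟩ := exists_isGδ_one_mem_notMem_nhds_one hG
  obtain ⟨𝒱, hT𝒱, h𝒱, hN⟩ := LindelofSpace.exists_isNormalNhdsSystem_superset hT hTopen
    (mem_sInter.mp hS1)
  have hNS : (hN.subgroup : Set G) ⊆ ⋂₀ T := sInter_subset_sInter hT𝒱
  refine ⟨hN.subgroup, hN.subgroup_normal, hN.isClosed_subgroup,
    hN.isClosed_subgroup.isNowhereDense_iff.mpr ?_, hN.isGδ_subgroup h𝒱⟩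
  -- a subgroup with an interior point is open, so it would be a neighbourhood of `1` inside `S`
  refine eq_empty_of_forall_notMem fun x hx => hS (Filter.mem_of_superset ?_ hNS)
  exact (hN.subgroup.isOpen_of_mem_nhds (mem_interior_iff_mem_nhds.mp hx)).mem_nhds
    hN.subgroup.one_mem

/-- Any Lindelöf Hausdorff topological group which is not a P-space contains a closed,
nowhere dense, Gδ normal subgroup. -/
theorem statement6 {G : Type u} [Group G] [TopologicalSpace G] [IsTopologicalGroup G]
    [T2Space G] [LindelofSpace G] (hG : ¬ IsPSpace G) :
    ∃ N : Subgroup G, N.Normal ∧ IsClosed (N : Set G) ∧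
      IsNowhereDense (N : Set G) ∧ IsGδ (N : Set G) :=
  statement6_general hG
end

section
/- Let f : X → Y be a continuous open surjection between topological spaces. If X is basically disconnected, then Y is basically disconnected. -/
open Set Topology Pointwise

universe u v w

/- Cozero sets pull back to cozero sets, and for a continuous open map taking closures commutes
with taking preimages. Hence, for a cozero set `s ⊆ Y`, surjectivity gives
`closure s = f '' closure (f ⁻¹' s)`, the image of an open set under an open map. -/

theorem IsCozeroSet.preimage {X : Type u} {Y : Type v} [TopologicalSpace X] [TopologicalSpace Y]
    {f : X → Y} (hf : Continuous f) {s : Set Y} (hs : IsCozeroSet s) :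
    IsCozeroSet (f ⁻¹' s) := by
  obtain ⟨g, hg, rfl⟩ := hs
  exact ⟨g ∘ f, hg.comp hf, rfl⟩

theorem IsOpenMap.closure_eq_image_closure_preimage {X : Type u} {Y : Type v}
    [TopologicalSpace X] [TopologicalSpace Y] {f : X → Y} (ho : IsOpenMap f)
    (hc : Continuous f) (hs : Function.Surjective f) (s : Set Y) :
    closure s = f '' closure (f ⁻¹' s) := by
  rw [← ho.preimage_closure_eq_closure_preimage hc, image_preimage_eq _ hs]

/-- The image of a basically disconnected space under a continuous open surjection is
basically disconnected. -/
theorem statement18 {X : Type u} {Y : Type v} [TopologicalSpace X] [TopologicalSpace Y]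
    (f : X → Y) (hc : Continuous f) (ho : IsOpenMap f) (hs : Function.Surjective f)
    (hX : IsBasicallyDisconnected X) : IsBasicallyDisconnected Y := by
  intro s hcoz
  rw [ho.closure_eq_image_closure_preimage hc hs s]
  exact ho _ (hX _ (hcoz.preimage hc))
end
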